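/- For the Gaussian window g_σ, C(ξ²g_σ)(η,γ) := ∫_ℝ ξ² g_σ(ξ) e^{-i2πξη} e^{-iπγξ²} dξ = σ² · (1/(1+i2πσ²γ)^{3/2} - (2πση)²/(1+i2πσ²γ)^{5/2}) · exp(-2π²σ²η²/(1+i2πσ²γ)). -/

import Mathlib

open Real MeasureTheory

noncomputable def cexp (x : ℝ) : ℂ := Complex.exp (Complex.I * (x : ℂ))

/-- Gaussian window `g_σ(ξ) = (1/(σ√(2π))) e^{-ξ²/(2σ²)}`. -/
noncomputable def gsig (σ ξ : ℝ) : ℝ := (1 / (σ * Real.sqrt (2 * π))) * Real.exp (-ξ ^ 2 / (2 * σ ^ 2))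

lemma aux_integral_deriv_zero {f : ℝ → ℂ} (hf : Integrable f) (h'f : Differentiable ℝ f)
    (hf' : Integrable (deriv f)) : ∫ x : ℝ, deriv f x = 0 := by
  have h := congrFun (Real.fourier_deriv hf h'f hf') 0
  rw [Real.fourier_real_eq_integral_exp_smul] at h
  simpa using h

lemma aux_integrable_pow_mul {b c : ℂ} (hb : 0 < b.re) (hc : c.re = 0) (n : ℕ) :
    Integrable (fun x : ℝ => (x : ℂ) ^ n * Complex.exp (-b * x ^ 2 + c * x)) := by
  have hmeas : AEStronglyMeasurable
      (fun x : ℝ => (x : ℂ) ^ n * Complex.exp (-b * x ^ 2 + c * x)) volume := by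
    apply Continuous.aestronglyMeasurable; fun_prop
  have hnorm : ∀ x : ℝ, ‖(x : ℂ) ^ n * Complex.exp (-b * x ^ 2 + c * x)‖
      = |x| ^ n * Real.exp (-b.re * x ^ 2) := by
    intro x
    have h2 : (-b * (x : ℂ) ^ 2 + c * (x : ℂ)).re = -b.re * x ^ 2 := by
      simp [← Complex.ofReal_pow, Complex.add_re, Complex.mul_re, hc]
    rw [norm_mul, norm_pow, Complex.norm_exp,
      Complex.norm_real, Real.norm_eq_abs, h2]
  have key : Integrable (fun x : ℝ => |x| ^ n * Real.exp (-b.re * x ^ 2)) := by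
    have hs : (-1 : ℝ) < (n : ℝ) := lt_of_lt_of_le (by norm_num) (Nat.cast_nonneg n)
    have h := (integrable_rpow_mul_exp_neg_mul_sq hb hs).abs
    simpa [abs_mul, Real.abs_exp, Real.rpow_natCast, abs_pow] using h
  refine (integrable_norm_iff hmeas).mp ?_
  have : (fun x : ℝ => ‖(x : ℂ) ^ n * Complex.exp (-b * x ^ 2 + c * x)‖)
      = fun x : ℝ => |x| ^ n * Real.exp (-b.re * x ^ 2) := funext hnorm
  rw [this]; exact key

lemma aux_moment2 {b c : ℂ} (hb : 0 < b.re) (hc : c.re = 0) :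
    ∫ x : ℝ, (x : ℂ) ^ 2 * Complex.exp (-b * x ^ 2 + c * x)
      = (↑π / b) ^ ((1 : ℂ) / 2) * Complex.exp (c ^ 2 / (4 * b)) * (2 * b + c ^ 2) / (4 * b ^ 2) := by
  have hb0 : b ≠ 0 := fun h => by simp [h] at hb
  set f : ℝ → ℂ := fun x => Complex.exp (-b * x ^ 2 + c * x) with hfdef
  have hint : ∀ n : ℕ, Integrable fun x : ℝ => (x : ℂ) ^ n * f x := aux_integrable_pow_mul hb hc
  have hf : Integrable f := by simpa using hint 0
  have hint1 : Integrable fun x : ℝ => (x : ℂ) * f x := by simpa using hint 1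
  have J0 : ∫ x : ℝ, f x = (↑π / b) ^ ((1 : ℂ) / 2) * Complex.exp (c ^ 2 / (4 * b)) := by
    have h := integral_cexp_quadratic (b := -b) (by simpa using hb) c 0
    simp only [add_zero, neg_neg, zero_sub, mul_neg, div_neg, neg_mul] at h
    rw [hfdef]; simp only [neg_mul]; exact h
  have hder : ∀ x : ℝ, HasDerivAt f ((-2 * b * x + c) * f x) x := by
    intro x
    have h1 : HasDerivAt (fun z : ℂ => -b * z ^ 2 + c * z) (-2 * b * x + c) (x : ℂ) := by
      have h2 := (((hasDerivAt_pow 2 ((x : ℂ)))).const_mul (-b)).add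
        ((hasDerivAt_id ((x : ℂ))).const_mul c)
      exact h2.congr_deriv (by push_cast; ring)
    have := (h1.comp_ofReal).cexp
    simpa [hfdef, mul_comm] using this
  have hd1 : Differentiable ℝ f := fun x => (hder x).differentiableAt
  have hderiv : deriv f = fun x : ℝ => (-2 * b * x + c) * f x := funext fun x => (hder x).deriv
  have hintc : Integrable fun x : ℝ => (-2 * b * x + c) * f x := by
    have he : (fun x : ℝ => (-2 * b * x + c) * f x)
        = fun x : ℝ => (-2 * b) * ((x : ℂ) * f x) + c * f x := funext fun x => by ring
    rw [he]; exact (hint1.const_mul _).add (hf.const_mul c)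
  have e1 : (-2 * b) * (∫ x : ℝ, (x : ℂ) * f x) + c * (∫ x : ℝ, f x) = 0 := by
    have h0 : ∫ x : ℝ, (-2 * b * x + c) * f x = 0 := by
      rw [show (fun x : ℝ => (-2 * b * x + c) * f x) = deriv f from hderiv.symm]
      exact aux_integral_deriv_zero hf hd1 (by rw [hderiv]; exact hintc)
    have he : (fun x : ℝ => (-2 * b * x + c) * f x)
        = fun x : ℝ => (-2 * b) * ((x : ℂ) * f x) + c * f x := funext fun x => by ring
    rw [he, integral_add (hint1.const_mul _) (hf.const_mul c), integral_const_mul,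
      integral_const_mul] at h0
    exact h0
  have hderg : ∀ x : ℝ, HasDerivAt (fun x : ℝ => (x : ℂ) * f x)
      (f x + (x : ℂ) * ((-2 * b * x + c) * f x)) x := by
    intro x
    have hx : HasDerivAt (fun y : ℝ => (y : ℂ)) 1 x := Complex.ofRealCLM.hasDerivAt
    have := hx.mul (hder x)
    simp only [one_mul] at this
    exact this
  have hdg : Differentiable ℝ fun x : ℝ => (x : ℂ) * f x := fun x => (hderg x).differentiableAt
  have hderivg : deriv (fun x : ℝ => (x : ℂ) * f x)
      = fun x : ℝ => f x + (x : ℂ) * ((-2 * b * x + c) * f x) := funext fun x => (hderg x).deriv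
  have hintg : Integrable fun x : ℝ => f x + (x : ℂ) * ((-2 * b * x + c) * f x) := by
    have he : (fun x : ℝ => f x + (x : ℂ) * ((-2 * b * x + c) * f x))
        = fun x : ℝ => f x + ((-2 * b) * ((x : ℂ) ^ 2 * f x) + c * ((x : ℂ) * f x)) :=
      funext fun x => by ring
    rw [he]; exact hf.add (((hint 2).const_mul _).add (hint1.const_mul c))
  have e2 : (∫ x : ℝ, f x) + ((-2 * b) * (∫ x : ℝ, (x : ℂ) ^ 2 * f x)
      + c * (∫ x : ℝ, (x : ℂ) * f x)) = 0 := by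
    have h0 : ∫ x : ℝ, (f x + (x : ℂ) * ((-2 * b * x + c) * f x)) = 0 := by
      rw [show (fun x : ℝ => f x + (x : ℂ) * ((-2 * b * x + c) * f x))
        = deriv (fun x : ℝ => (x : ℂ) * f x) from hderivg.symm]
      exact aux_integral_deriv_zero hint1 hdg (by rw [hderivg]; exact hintg)
    have he : (fun x : ℝ => f x + (x : ℂ) * ((-2 * b * x + c) * f x))
        = fun x : ℝ => f x + ((-2 * b) * ((x : ℂ) ^ 2 * f x) + c * ((x : ℂ) * f x)) :=
      funext fun x => by ring
    have hA : Integrable (fun x : ℝ => (-2 * b) * ((x : ℂ) ^ 2 * f x)) := (hint 2).const_mul _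
    have hB : Integrable (fun x : ℝ => c * ((x : ℂ) * f x)) := hint1.const_mul c
    have hAB : Integrable (fun x : ℝ => (-2 * b) * ((x : ℂ) ^ 2 * f x) + c * ((x : ℂ) * f x)) :=
      hA.add hB
    rw [he, integral_add hf hAB, integral_add hA hB, integral_const_mul, integral_const_mul] at h0
    exact h0
  have h4b : (4 : ℂ) * b ^ 2 ≠ 0 := mul_ne_zero (by norm_num) (pow_ne_zero 2 hb0)
  have main : (∫ x : ℝ, (x : ℂ) ^ 2 * f x)
      = (↑π / b) ^ ((1 : ℂ) / 2) * Complex.exp (c ^ 2 / (4 * b)) * (2 * b + c ^ 2) / (4 * b ^ 2) := by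
    rw [← J0, eq_div_iff h4b]
    linear_combination (-2 * b) * e2 - c * e1
  exact main

lemma aux_ofReal_mul_cpow {r : ℝ} (hr : 0 < r) {w : ℂ} (hw : w ≠ 0) (s : ℂ) :
    ((r : ℂ) * w) ^ s = (r : ℂ) ^ s * w ^ s := by
  have hr' : (r : ℂ) ≠ 0 := Complex.ofReal_ne_zero.mpr hr.ne'
  rw [Complex.cpow_def_of_ne_zero (mul_ne_zero hr' hw), Complex.log_ofReal_mul hr hw,
    Complex.ofReal_log hr.le, add_mul, Complex.exp_add,
    ← Complex.cpow_def_of_ne_zero hr', ← Complex.cpow_def_of_ne_zero hw]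

/-- Chirped second-moment integral of the Gaussian window (principal branch powers):
`C(ξ²g_σ)(η,γ) = σ²(1/(1+i2πσ²γ)^{3/2} - (2πση)²/(1+i2πσ²γ)^{5/2})·exp(-2π²σ²η²/(1+i2πσ²γ))`. -/
theorem gaussian_chirped_second_moment (σ η γ : ℝ) (hσ : 0 < σ) :
    (∫ ξ : ℝ, (ξ : ℂ) ^ 2 * (gsig σ ξ : ℂ) * cexp (-(2 * π * ξ * η)) * cexp (-(π * γ * ξ ^ 2)))
      = ((σ ^ 2 : ℝ) : ℂ)
          * (1 / (1 + Complex.I * ((2 * π * σ ^ 2 * γ : ℝ) : ℂ)) ^ ((3 : ℂ) / 2)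
            - (((2 * π * σ * η) ^ 2 : ℝ) : ℂ)
                / (1 + Complex.I * ((2 * π * σ ^ 2 * γ : ℝ) : ℂ)) ^ ((5 : ℂ) / 2))
        * Complex.exp (-(((2 * π ^ 2 * σ ^ 2 * η ^ 2 : ℝ) : ℂ)
            / (1 + Complex.I * ((2 * π * σ ^ 2 * γ : ℝ) : ℂ)))) := by
  have hπ := Real.pi_pos
  have hσ' : (σ : ℂ) ≠ 0 := Complex.ofReal_ne_zero.mpr hσ.ne'
  set B : ℂ := 1 + Complex.I * ((2 * π * σ ^ 2 * γ : ℝ) : ℂ) with hBdef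
  have hBre : B.re = 1 := by
    rw [hBdef]
    simp only [Complex.add_re, Complex.one_re, Complex.mul_re, Complex.I_re, Complex.I_im,
      Complex.ofReal_re, Complex.ofReal_im]
    ring
  have hB0 : B ≠ 0 := fun h => by simp [h] at hBre
  have hargB : B.arg ≠ π := by
    simp only [Ne, Complex.arg_eq_pi_iff, hBre]
    rintro ⟨h1, -⟩
    norm_num at h1
  set b : ℂ := B / ((2 * σ ^ 2 : ℝ) : ℂ) with hbdef
  have hbre : 0 < b.re := by
    rw [hbdef, Complex.div_ofReal_re, hBre]
    positivity
  have hb0 : b ≠ 0 := fun h => by rw [h] at hbre; simp at hbre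
  set c : ℂ := ((-(2 * π * η) : ℝ) : ℂ) * Complex.I with hcdef
  have hcre : c.re = 0 := by simp [hcdef]
  have hc2 : c ^ 2 = ((-(4 * π ^ 2 * η ^ 2) : ℝ) : ℂ) := by
    rw [hcdef, mul_pow, Complex.I_sq]
    push_cast
    ring
  have hInt : (∫ ξ : ℝ, (ξ : ℂ) ^ 2 * (gsig σ ξ : ℂ) * cexp (-(2 * π * ξ * η))
        * cexp (-(π * γ * ξ ^ 2)))
      = ((1 / (σ * Real.sqrt (2 * π)) : ℝ) : ℂ)
          * ∫ ξ : ℝ, (ξ : ℂ) ^ 2 * Complex.exp (-b * ξ ^ 2 + c * ξ) := by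
    rw [← integral_const_mul]
    congr 1
    funext ξ
    have e : Complex.exp (((-ξ ^ 2 / (2 * σ ^ 2) : ℝ)) : ℂ)
        * (Complex.exp (Complex.I * ((-(2 * π * ξ * η) : ℝ) : ℂ))
          * Complex.exp (Complex.I * ((-(π * γ * ξ ^ 2) : ℝ) : ℂ)))
        = Complex.exp (-b * ξ ^ 2 + c * ξ) := by
      rw [← Complex.exp_add, ← Complex.exp_add]
      congr 1
      rw [hbdef, hcdef, hBdef]
      push_cast
      field_simp
      ring
    rw [gsig, cexp, cexp, Complex.ofReal_mul, Complex.ofReal_exp, ← e]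
    push_cast
    ring
  rw [hInt, aux_moment2 hbre hcre]
  have hexp : c ^ 2 / (4 * b) = -(((2 * π ^ 2 * σ ^ 2 * η ^ 2 : ℝ) : ℂ) / B) := by
    rw [hc2, hbdef]
    push_cast
    field_simp
  have hpow : ((π : ℂ) / b) ^ ((1 : ℂ) / 2)
      = ((σ * Real.sqrt (2 * π) : ℝ) : ℂ) * (B ^ ((1 : ℂ) / 2))⁻¹ := by
    have h1 : ((π : ℂ) / b) = ((2 * π * σ ^ 2 : ℝ) : ℂ) * B⁻¹ := by
      rw [hbdef]
      push_cast
      field_simp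
    rw [h1, aux_ofReal_mul_cpow (by positivity) (inv_ne_zero hB0), Complex.inv_cpow _ _ hargB]
    congr 1
    rw [show ((1 : ℂ) / 2) = (((1 / 2 : ℝ) : ℝ) : ℂ) by norm_num,
      ← Complex.ofReal_cpow (by positivity)]
    congr 1
    rw [← Real.sqrt_eq_rpow, show (2 * π * σ ^ 2 : ℝ) = 2 * π * σ ^ 2 from rfl,
      show (2 * π * σ ^ 2 : ℝ) = (2 * π) * σ ^ 2 by ring, Real.sqrt_mul (by positivity),
      Real.sqrt_sq hσ.le]
    ring
  have hB32 : B ^ ((3 : ℂ) / 2) = B * B ^ ((1 : ℂ) / 2) := by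
    rw [show (3 : ℂ) / 2 = 1 + 1 / 2 by norm_num, Complex.cpow_add _ _ hB0, Complex.cpow_one]
  have hB52 : B ^ ((5 : ℂ) / 2) = B ^ 2 * B ^ ((1 : ℂ) / 2) := by
    rw [show (5 : ℂ) / 2 = 2 + 1 / 2 by norm_num, Complex.cpow_add _ _ hB0,
      show (2 : ℂ) = ((2 : ℕ) : ℂ) by norm_num, Complex.cpow_natCast]
  have hs0 : B ^ ((1 : ℂ) / 2) ≠ 0 := by
    simp [Complex.cpow_eq_zero_iff, hB0]
  have hss : B ^ ((1 : ℂ) / 2) * B ^ ((1 : ℂ) / 2) = B := by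
    rw [← Complex.cpow_add _ _ hB0]
    norm_num
  rw [hexp, hpow, hB32, hB52, hc2, hbdef]
  set s : ℂ := B ^ ((1 : ℂ) / 2) with hsdef
  rw [← hss]
  have hsr : ((σ * Real.sqrt (2 * π) : ℝ) : ℂ) ≠ 0 := by
    refine Complex.ofReal_ne_zero.mpr ?_
    positivity
  have h2c : ((Real.sqrt 2 : ℝ) : ℂ) ≠ 0 := Complex.ofReal_ne_zero.mpr (by positivity)
  have hpc : ((Real.sqrt π : ℝ) : ℂ) ≠ 0 := Complex.ofReal_ne_zero.mpr (by positivity)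
  have hs0' : s ≠ 0 := hs0
  clear_value s
  push_cast
  generalize Complex.exp (-(2 * ↑π ^ 2 * ↑σ ^ 2 * ↑η ^ 2 / (s * s))) = E
  field_simp [hs0', hσ', h2c, hpc]
  have u1 : (σ : ℂ) * (σ : ℂ)⁻¹ = 1 := mul_inv_cancel₀ hσ'
  have u2 : ((Real.sqrt 2 : ℝ) : ℂ) * ((Real.sqrt 2 : ℝ) : ℂ)⁻¹ = 1 := mul_inv_cancel₀ h2c
  have u3 : ((Real.sqrt π : ℝ) : ℂ) * ((Real.sqrt π : ℝ) : ℂ)⁻¹ = 1 := mul_inv_cancel₀ hpc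
  have u4 : s * s⁻¹ = 1 := mul_inv_cancel₀ hs0
  ring
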